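/- Let G be the simple graph on vertex set {a,b,c,d,e} with edge set {{a,b},{b,c},{c,d},{d,e},{e,a},{b,d}}. There exists a linear arrangement of G (not necessarily planar) whose cost is strictly smaller than the cost of every planar linear arrangement of G. In other words, the optimal value of the minimum linear arrangement problem on G is strictly smaller than the optimal value of the planar minimum linear arrangement problem on G. -/

import Mathlib

namespace CounterexampleMinLA

/-- The vertex `a`. -/
def a : Fin 5 := 0
/-- The vertex `b`. -/
def b : Fin 5 := 1
/-- The vertex `c`. -/
def c : Fin 5 := 2
/-- The vertex `d`. -/
def d : Fin 5 := 3
/-- The vertex `e`. -/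
def e : Fin 5 := 4

/-- The edge set of the graph `G`: the 5-cycle a-b-c-d-e-a together with the chord {b,d}. -/
def edges : Finset (Sym2 (Fin 5)) := {s(a,b), s(b,c), s(c,d), s(d,e), s(e,a), s(b,d)}

/-- The edges of the 5-cycle a-b-c-d-e-a. -/
def cycleEdges : Finset (Sym2 (Fin 5)) := {s(a,b), s(b,c), s(c,d), s(d,e), s(e,a)}

/-- A linear arrangement: a bijection from the vertices onto the positions {1,…,5}. -/
def IsArrangement (π : Fin 5 → ℕ) : Prop :=
  Set.BijOn π Set.univ (Set.Icc 1 5)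

/-- The cost of an arrangement: the sum over all edges {u,v} of |π(u) − π(v)|. -/
def cost (π : Fin 5 → ℕ) : ℤ :=
  ∑ ed ∈ edges,
    Sym2.lift ⟨fun u v => |(π u : ℤ) - (π v : ℤ)|, fun u v => abs_sub_comm _ _⟩ ed

/-- Two distinct edges cross in `π` if their endpoints can be labelled `{u,v}`, `{x,y}`
with `π u < π x < π v < π y`. -/
def Cross (π : Fin 5 → ℕ) (e₁ e₂ : Sym2 (Fin 5)) : Prop :=
  e₁ ≠ e₂ ∧ ∃ u v x y, e₁ = s(u, v) ∧ e₂ = s(x, y) ∧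
    π u < π x ∧ π x < π v ∧ π v < π y

/-- An arrangement is planar if no two edges of the graph cross in it. -/
def IsPlanar (π : Fin 5 → ℕ) : Prop :=
  ∀ e₁ ∈ edges, ∀ e₂ ∈ edges, ¬ Cross π e₁ e₂

/-- `e₁` dominates `e₂` in `π` if they are distinct and their endpoints can be labelled
`e₁ = {x,y}`, `e₂ = {u,v}` with `π u ≤ π x < π y ≤ π v`. -/
def Dominates (π : Fin 5 → ℕ) (e₁ e₂ : Sym2 (Fin 5)) : Prop :=
  e₁ ≠ e₂ ∧ ∃ x y u v, e₁ = s(x, y) ∧ e₂ = s(u, v) ∧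
    π u ≤ π x ∧ π x < π y ∧ π y ≤ π v

/-!
Placing the vertices in the order `a, e, b, d, c` costs 9. Any arrangement of the 5-cycle costs at
least 8, since the cycle runs from the leftmost to the rightmost vertex and back, and the chord
`{b,d}` costs at least 1; an exhaustive check over the 120 permutations shows that every
arrangement attaining 9 has two interleaved edges, so planar arrangements cost at least 10.
-/

def orientedEdges : List (Fin 5 × Fin 5) :=
  [(a,b), (b,c), (c,d), (d,e), (e,a), (b,d), (b,a), (c,b), (d,c), (e,d), (a,e), (d,b)]

lemma mk_mem_edges_of_mem_orientedEdges : ∀ p ∈ orientedEdges, s(p.1, p.2) ∈ edges := by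
  decide

lemma cross_of_lt {π : Fin 5 → ℕ} {u v x y : Fin 5} (hux : π u < π x) (hxv : π x < π v)
    (hvy : π v < π y) : Cross π s(u, v) s(x, y) := by
  refine ⟨fun h => ?_, u, v, x, y, rfl, rfl, hux, hxv, hvy⟩
  rcases Sym2.eq_iff.mp h with ⟨rfl, rfl⟩ | ⟨rfl, rfl⟩ <;> omega

lemma IsPlanar.not_interleaved {π : Fin 5 → ℕ} (hπ : IsPlanar π) :
    ∀ p ∈ orientedEdges, ∀ q ∈ orientedEdges,
      ¬ (π p.1 < π q.1 ∧ π q.1 < π p.2 ∧ π p.2 < π q.2) :=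
  fun p hp q hq ⟨hux, hxv, hvy⟩ =>
    hπ _ (mk_mem_edges_of_mem_orientedEdges p hp) _ (mk_mem_edges_of_mem_orientedEdges q hq)
      (cross_of_lt hux hxv hvy)

lemma cost_eq (π : Fin 5 → ℕ) : cost π =
    |(π a : ℤ) - π b| + |(π b : ℤ) - π c| + |(π c : ℤ) - π d| + |(π d : ℤ) - π e|
      + |(π e : ℤ) - π a| + |(π b : ℤ) - π d| := by
  simp +decide [cost, edges, Finset.sum_insert]
  ring

lemma exists_perm_eq_succ_of_bijOn {n : ℕ} {π : Fin n → ℕ}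
    (hπ : Set.BijOn π Set.univ (Set.Icc 1 n)) :
    ∃ g : Equiv.Perm (Fin n), ∀ v, π v = g v + 1 := by
  have hbound (v : Fin n) : 1 ≤ π v ∧ π v ≤ n := hπ.mapsTo (Set.mem_univ v)
  let f (v : Fin n) : Fin n := ⟨π v - 1, by have := hbound v; omega⟩
  have hf : f.Injective := fun u v huv => by
    have := hbound u; have := hbound v
    exact hπ.injOn (Set.mem_univ u) (Set.mem_univ v) (by simp [f, Fin.ext_iff] at huv; omega)
  exact ⟨Equiv.ofBijective f (Finite.injective_iff_bijective.mp hf),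
    fun v => by have := hbound v; simp [f]; omega⟩

set_option maxRecDepth 40000 in
lemma ten_le_cost_of_perm : ∀ g : Equiv.Perm (Fin 5),
    (∀ p ∈ orientedEdges, ∀ q ∈ orientedEdges, ¬ (g p.1 < g q.1 ∧ g q.1 < g p.2 ∧ g p.2 < g q.2)) →
    10 ≤ |(g a : ℤ) - g b| + |(g b : ℤ) - g c| + |(g c : ℤ) - g d| + |(g d : ℤ) - g e|
      + |(g e : ℤ) - g a| + |(g b : ℤ) - g d| := by
  decide

theorem ten_le_cost_of_isPlanar {π : Fin 5 → ℕ} (hπ : IsArrangement π) (hpl : IsPlanar π) :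
    10 ≤ cost π := by
  obtain ⟨g, hg⟩ := exists_perm_eq_succ_of_bijOn hπ
  have hg' : ∀ p ∈ orientedEdges, ∀ q ∈ orientedEdges,
      ¬ (g p.1 < g q.1 ∧ g q.1 < g p.2 ∧ g p.2 < g q.2) := fun p hp q hq h =>
    hpl.not_interleaved p hp q hq (by simp only [hg, Fin.lt_def] at h ⊢; omega)
  rw [cost_eq]
  simpa only [hg, Nat.cast_add, add_sub_add_right_eq_sub] using ten_le_cost_of_perm g hg'

/-- The order `a, e, b, d, c`, in which `{a,b}` crosses `{e,d}`. -/
def crossingArrangement : Fin 5 → ℕ := ![1, 3, 5, 4, 2]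

lemma isArrangement_crossingArrangement : IsArrangement crossingArrangement := by
  refine ⟨fun v _ => ?_, fun u _ v _ huv => ?_, fun n ⟨h1, h5⟩ => ?_⟩
  · fin_cases v <;> simp [crossingArrangement]
  · fin_cases u <;> fin_cases v <;> simp_all [crossingArrangement]
  · interval_cases n
    exacts [⟨0, trivial, rfl⟩, ⟨4, trivial, rfl⟩, ⟨1, trivial, rfl⟩, ⟨3, trivial, rfl⟩,
      ⟨2, trivial, rfl⟩]

lemma cost_crossingArrangement : cost crossingArrangement = 9 := by
  rw [cost_eq]
  decide

/-- There is a linear arrangement of `G` whose cost is strictly smaller than the cost of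
every planar linear arrangement of `G`: the minimum linear arrangement of `G` is strictly
cheaper than the minimum planar linear arrangement of `G`. -/
theorem exists_arrangement_cheaper_than_every_planar :
    ∃ π : Fin 5 → ℕ, IsArrangement π ∧
      ∀ σ : Fin 5 → ℕ, IsArrangement σ → IsPlanar σ → cost π < cost σ :=
  ⟨crossingArrangement, isArrangement_crossingArrangement, fun _σ hσ hpl => by
    linarith [cost_crossingArrangement, ten_le_cost_of_isPlanar hσ hpl]⟩

end CounterexampleMinLA
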